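/- Let X be a separable infinite-dimensional uniformly smooth real Banach space and let ℬ = {B(x_n, R_n)}_{n=1}^∞ be a countable collection of closed balls in X such that R_n → ∞ as n → ∞. If ℬ is not locally finite (i.e., some point of X is singular for ℬ), then ℬ is not point-finite (i.e., some point of X belongs to infinitely many of the balls B(x_n, R_n)). -/

import Mathlib

/-!
Let `p` be a singular point. If `p` lies in infinitely many balls we are done; otherwise, along a
subsequence, `v n = x n - p` satisfies `‖v n‖ → ∞` and `‖v n‖ - R n → 0`. Uniform smoothness
gives, for a norming functional `φ n` of `v n`, `‖v n - y‖ ≤ ‖v n‖ - φ n y + ε ‖y‖` as soon as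
`‖y‖ ≤ δ(ε) ‖v n‖`; so `p + y` lies in the `n`-th ball once `φ n y` beats `‖v n‖ - R n + ε ‖y‖`.
Let `F` be a weak-* limit of the `φ n` along an ultrafilter. If `F ≠ 0`, any `y` with `F y > 0`
works. If `F = 0`, a gliding hump gives `y = ∑ 2⁻ᵏ z_k`, where `z_k` lies in the kernels of the
functionals chosen before and `φ_{n_k} z_k > 1/3`. This is possible because a weak-* null
sequence of norm-one functionals keeps norm `> 1/3` on every finite-codimensional subspace:
by Hahn–Banach, the defect lives in the finite-dimensional span of the defining functionals,
where weak-* and norm convergence agree.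
-/

open Metric Set Filter Topology

/-- A real normed space is *uniformly smooth* (its norm is uniformly Fréchet
differentiable on the unit sphere), expressed via the modulus of smoothness:
for every `ε > 0` there is `δ > 0` such that
`‖x + y‖ + ‖x - y‖ ≤ 2 + ε * ‖y‖` whenever `‖x‖ = 1` and `‖y‖ ≤ δ`. -/
def UniformlySmooth (X : Type*) [NormedAddCommGroup X] [NormedSpace ℝ X] : Prop :=
  ∀ ε > 0, ∃ δ > 0, ∀ x y : X, ‖x‖ = 1 → ‖y‖ ≤ δ → ‖x + y‖ + ‖x - y‖ ≤ 2 + ε * ‖y‖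

theorem IsCompact.exists_tendsto_ultrafilter {α ι : Type*} [TopologicalSpace α] {K : Set α}
    (hK : IsCompact K) (U : Ultrafilter ι) {u : ι → α} (hu : ∀ᶠ i in U, u i ∈ K) :
    ∃ a ∈ K, Tendsto u U (𝓝 a) :=
  hK.ultrafilter_le_nhds' (U.map u) hu

section Bounded

variable {ι E : Type*} [NormedAddCommGroup E]

theorem exists_tendsto_ultrafilter_of_norm_le [ProperSpace E] (U : Ultrafilter ι) {u : ι → E}
    {C : ℝ} (hC : ∀ i, ‖u i‖ ≤ C) : ∃ a, Tendsto u U (𝓝 a) := by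
  obtain ⟨a, -, ha⟩ := (isCompact_closedBall (0 : E) C).exists_tendsto_ultrafilter U
    (.of_forall fun i => mem_closedBall_zero_iff.2 (hC i))
  exact ⟨a, ha⟩

theorem Submodule.exists_tendsto_ultrafilter_of_norm_le [NormedSpace ℝ E] (V : Submodule ℝ E)
    [FiniteDimensional ℝ V] (U : Ultrafilter ι) {u : ι → E} (hV : ∀ i, u i ∈ V) {C : ℝ}
    (hC : ∀ i, ‖u i‖ ≤ C) : ∃ a, Tendsto u U (𝓝 a) := by
  obtain ⟨a, ha⟩ :=
    _root_.exists_tendsto_ultrafilter_of_norm_le U (u := fun i => (⟨u i, hV i⟩ : V)) hC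
  exact ⟨a, (continuous_subtype_val.tendsto a).comp ha⟩

theorem norm_smul_le_of_norm_le_one [NormedSpace ℝ E] {a : ℝ} {z : E} (ha : 0 ≤ a)
    (hz : ‖z‖ ≤ 1) : ‖a • z‖ ≤ a := by
  rw [norm_smul, Real.norm_of_nonneg ha]
  exact mul_le_of_le_one_right ha hz

theorem norm_tsum_smul_le [NormedSpace ℝ E] {a : ℕ → ℝ} {z : ℕ → E} (ha : ∀ i, 0 ≤ a i)
    (ha' : Summable a) (hz : ∀ i, ‖z i‖ ≤ 1) : ‖∑' i, a i • z i‖ ≤ ∑' i, a i :=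
  tsum_of_norm_bounded ha'.hasSum fun i => norm_smul_le_of_norm_le_one (ha i) (hz i)

end Bounded

namespace StrongDual

variable {ι E : Type*} [NormedAddCommGroup E] [NormedSpace ℝ E]

theorem exists_tendsto_ultrafilter_of_norm_le (U : Ultrafilter ι) {T : ι → StrongDual ℝ E}
    {C : ℝ} (hC : ∀ i, ‖T i‖ ≤ C) : ∃ F : StrongDual ℝ E, ∀ w, Tendsto (T · w) U (𝓝 (F w)) := by
  obtain ⟨F, -, hF⟩ := (WeakDual.isCompact_closedBall (0 : StrongDual ℝ E) C
    ).exists_tendsto_ultrafilter U (u := fun i => toWeakDual (T i))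
      (.of_forall fun i => mem_closedBall_zero_iff.2 (hC i))
  exact ⟨WeakDual.toStrongDual F, tendsto_iff_forall_eval_tendsto_topDualPairing.1 hF⟩

theorem norm_le_of_tendsto {l : Filter ι} [l.NeBot] {G : ι → StrongDual ℝ E}
    {F : StrongDual ℝ E} {t : ℝ} (hG : ∀ w, Tendsto (G · w) l (𝓝 (F w)))
    (ht : Tendsto (‖G ·‖) l (𝓝 t)) : ‖F‖ ≤ t := by
  refine F.opNorm_le_bound (ge_of_tendsto ht (.of_forall fun _ => norm_nonneg _)) fun w => ?_
  exact le_of_tendsto_of_tendsto' (hG w).norm (ht.mul_const ‖w‖) fun i => (G i).le_opNorm w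

theorem exists_norm_lt_one_lt_apply (f : StrongDual ℝ E) {c : ℝ} (hc : c < ‖f‖) :
    ∃ z, ‖z‖ < 1 ∧ c < f z := by
  obtain ⟨z, hz, hcz⟩ := f.exists_lt_apply_of_lt_opNorm hc
  rcases lt_abs.1 hcz with h | h
  · exact ⟨z, hz, h⟩
  · exact ⟨-z, by rwa [norm_neg], by rwa [map_neg]⟩

theorem one_le_norm_of_apply_eq_norm {f : StrongDual ℝ E} {x : E} (hx : x ≠ 0)
    (hfx : f x = ‖x‖) : 1 ≤ ‖f‖ := by
  have := hfx ▸ (le_abs_self (f x)).trans (f.le_opNorm x)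
  exact le_of_mul_le_mul_right (by simpa using this) (norm_pos_iff.2 hx)

theorem mem_span_of_iInf_ker_le_ker {κ : Type*} [Finite κ] {ψ : κ → StrongDual ℝ E}
    {φ : StrongDual ℝ E}
    (h : ⨅ k, LinearMap.ker (ψ k : E →ₗ[ℝ] ℝ) ≤ LinearMap.ker (φ : E →ₗ[ℝ] ℝ)) :
    φ ∈ Submodule.span ℝ (range ψ) := by
  have := _root_.mem_span_of_iInf_ker_le_ker h
  rw [range_comp'] at this
  obtain ⟨φ', hφ', hφ'φ⟩ := (Submodule.span_image (ContinuousLinearMap.coeLM ℝ)).le this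
  rwa [← ContinuousLinearMap.coe_injective hφ'φ]

theorem eventually_lt_norm_comp_subtypeL_iInf_ker {κ : Type*} [Finite κ]
    {U : Ultrafilter ι} {g : ι → StrongDual ℝ E} {C s c : ℝ} (hC : ∀ i, ‖g i‖ ≤ C)
    (hg : ∀ w, Tendsto (g · w) U (𝓝 0)) (hs : ∀ᶠ i in U, s ≤ ‖g i‖) (hc : c < s / 2)
    (ψ : κ → StrongDual ℝ E) :
    ∀ᶠ i in U, c < ‖(g i).comp (⨅ k, LinearMap.ker (ψ k : E →ₗ[ℝ] ℝ)).subtypeL‖ := by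
  set Y := ⨅ k, LinearMap.ker (ψ k : E →ₗ[ℝ] ℝ)
  have hu : ∀ i, ‖(g i).comp Y.subtypeL‖ ≤ ‖g i‖ := fun i =>
    ((g i).opNorm_comp_le _).trans (mul_le_of_le_one_right (norm_nonneg _) Y.norm_subtypeL_le)
  obtain ⟨t, ht⟩ := _root_.exists_tendsto_ultrafilter_of_norm_le U (C := C) fun i =>
    (norm_norm ((g i).comp Y.subtypeL)).trans_le ((hu i).trans (hC i))
  -- With `G i` a norm-preserving extension of `g i` restricted to `Y`, `g i - G i` vanishes on `Y`,
  -- so it lives in a finite-dimensional space and converges in norm to some `l`; then `G i → -l`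
  -- weak-*, and `s ≤ ‖l‖ + t ≤ 2 t`.
  choose G hGY hGnorm using fun i => exists_extension_norm_eq Y ((g i).comp Y.subtypeL)
  have hspan : ∀ i, g i - G i ∈ Submodule.span ℝ (range ψ) := fun i =>
    mem_span_of_iInf_ker_le_ker fun z hz => by simpa [sub_eq_zero] using (hGY i ⟨z, hz⟩).symm
  have : FiniteDimensional ℝ (Submodule.span ℝ (range ψ)) :=
    FiniteDimensional.span_of_finite ℝ (finite_range ψ)
  obtain ⟨l, hl⟩ := Submodule.exists_tendsto_ultrafilter_of_norm_le _ U hspan (C := C + C)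
    fun i => (norm_sub_le _ _).trans (by rw [hGnorm i]; linarith [hu i, hC i])
  have hGl : ∀ w, Tendsto (G · w) U (𝓝 ((-l) w)) := fun w => by
    simpa using (hg w).sub (((ContinuousLinearMap.apply ℝ ℝ w).continuous.tendsto l).comp hl)
  have hlt : ‖l‖ ≤ t := norm_neg l ▸ norm_le_of_tendsto hGl (by simpa [hGnorm] using ht)
  have hslt : s ≤ ‖l‖ + t := ge_of_tendsto (hl.norm.add ht) <| hs.mono fun i hi => hi.trans <|
    calc ‖g i‖ = ‖(g i - G i) + G i‖ := by rw [sub_add_cancel]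
      _ ≤ ‖g i - G i‖ + ‖(g i).comp Y.subtypeL‖ := (norm_add_le _ _).trans_eq (by rw [hGnorm])
  exact ht.eventually_const_lt (by linarith)

theorem le_apply_tsum_smul [CompleteSpace E] {a : ℕ → ℝ} {z : ℕ → E} (ha : ∀ i, 0 ≤ a i)
    (ha' : Summable a) (hz : ∀ i, ‖z i‖ ≤ 1) (φ : StrongDual ℝ E) {j : ℕ} {η : ℝ}
    (hη : 0 ≤ η) (hφz : ∀ i ≠ j, -η ≤ φ (z i)) :
    a j * φ (z j) - η * ∑' i, a i ≤ φ (∑' i, a i • z i) := by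
  classical
  have hsum : Summable fun i => a i • z i :=
    ha'.of_norm_bounded fun i => norm_smul_le_of_norm_le_one (ha i) (hz i)
  have hb : Summable fun i => a i * φ (z i) := by simpa using φ.summable hsum
  have hb' : Summable fun i => if i = j then 0 else a i * φ (z i) :=
    (hasSum_ite_sub_hasSum hb.hasSum j).summable
  rw [φ.map_tsum hsum]
  simp only [map_smul, smul_eq_mul]
  rw [hb.tsum_eq_add_tsum_ite j, sub_eq_add_neg, ← tsum_mul_left, ← tsum_neg]
  refine add_le_add le_rfl ((ha'.mul_left η).neg.tsum_le_tsum (fun i => ?_) hb')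
  split_ifs with h
  · exact neg_nonpos.2 (mul_nonneg hη (ha i))
  · nlinarith [hφz i h, ha i]

theorem exists_gliding_hump_seq {U : Ultrafilter ι} (hU : (U : Filter ι) ≤ cofinite)
    {φ : ι → StrongDual ℝ E} {C s c : ℝ} (hφ : ∀ i, ‖φ i‖ ≤ C) (hφs : ∀ᶠ i in U, s ≤ ‖φ i‖)
    (hc : c < s / 2) (hφ0 : ∀ w, Tendsto (φ · w) U (𝓝 0)) {η : ℕ → ℝ} (hη : ∀ k, 0 < η k)
    {Q : ℕ → ι → Prop} (hQ : ∀ k, ∀ᶠ i in U, Q k i) :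
    ∃ (k : ℕ → ℕ) (n : ℕ → ι) (z : ℕ → E), StrictMono k ∧ Function.Injective n ∧
      (∀ j, Q (k j) (n j) ∧ ‖z j‖ ≤ 1 ∧ c < φ (n j) (z j)) ∧
      ∀ i j, i < j → φ (n i) (z j) = 0 ∧ |φ (n j) (z i)| ≤ η (k j) := by
  -- The first coordinate counts steps, so that the tolerance `η k` is fixed before `n` is chosen.
  obtain ⟨a, hP, hr⟩ := exists_seq_of_forall_finset_exists
    (fun a : ℕ × ι × E => Q a.1 a.2.1 ∧ ‖a.2.2‖ ≤ 1 ∧ c < φ a.2.1 a.2.2)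
    (fun a b => a.1 < b.1 ∧ b.2.1 ≠ a.2.1 ∧ φ a.2.1 b.2.2 = 0 ∧ |φ b.2.1 a.2.2| ≤ η b.1)
    fun S _ => by
      set k := S.sup Prod.fst + 1
      set Y := ⨅ a : S, LinearMap.ker (φ a.1.2.1 : E →ₗ[ℝ] ℝ)
      have hev : ∀ᶠ i in U, Q k i ∧ (∀ a ∈ S, i ≠ a.2.1 ∧ |φ i a.2.2| ≤ η k) ∧
          c < ‖(φ i).comp Y.subtypeL‖ :=
        (hQ k).and <| (S.eventually_all.2 fun a _ =>
          ((eventually_cofinite_ne a.2.1).filter_mono hU).and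
            ((hφ0 a.2.2).abs.eventually_le_const (by simpa using hη k))).and
          (eventually_lt_norm_comp_subtypeL_iInf_ker hφ hφ0 hφs hc _)
      obtain ⟨i, hQi, hS, hci⟩ := hev.exists
      obtain ⟨z, hz, hcz⟩ := exists_norm_lt_one_lt_apply _ hci
      exact ⟨(k, i, z), ⟨hQi, hz.le, hcz⟩, fun a ha => ⟨Nat.lt_succ_of_le (S.le_sup ha),
        (hS a ha).1, (Submodule.mem_iInf _).1 z.2 ⟨a, ha⟩, (hS a ha).2⟩⟩
  exact ⟨fun j => (a j).1, fun j => (a j).2.1, fun j => (a j).2.2,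
    strictMono_nat_of_lt_succ fun j => (hr j (j + 1) j.lt_succ_self).1,
    .of_lt_imp_ne fun i j hij => (hr i j hij).2.1.symm, hP, fun i j hij => (hr i j hij).2.2⟩

end StrongDual

namespace UniformlySmooth

variable {X ι : Type*} [NormedAddCommGroup X] [NormedSpace ℝ X] {v : ι → X} {R : ι → ℝ}
  {φ : ι → StrongDual ℝ X}

theorem exists_norm_add_add_norm_sub_le (hs : UniformlySmooth X) {ε : ℝ} (hε : 0 < ε) :
    ∃ δ > 0, ∀ x y : X, ‖y‖ ≤ δ * ‖x‖ → ‖x + y‖ + ‖x - y‖ ≤ 2 * ‖x‖ + ε * ‖y‖ := by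
  obtain ⟨δ, hδ, H⟩ := hs ε hε
  refine ⟨δ, hδ, fun x y hy => ?_⟩
  rcases eq_or_ne x 0 with rfl | hx
  · simp [norm_le_zero_iff.1 (by simpa using hy : ‖y‖ ≤ 0)]
  have hx' : 0 < ‖x‖ := norm_pos_iff.2 hx
  have key := H (‖x‖⁻¹ • x) (‖x‖⁻¹ • y) (by simp [norm_smul, hx'.ne'])
    (by rw [norm_smul, norm_inv, norm_norm, inv_mul_le_iff₀ hx']; linarith)
  rw [← smul_add, ← smul_sub] at key
  simp only [norm_smul, norm_inv, norm_norm] at key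
  have := mul_le_mul_of_nonneg_left key hx'.le
  field_simp at this
  linarith

theorem exists_norm_sub_le (hs : UniformlySmooth X) {ε : ℝ} (hε : 0 < ε) :
    ∃ δ > 0, ∀ (f : StrongDual ℝ X) (x y : X), ‖f‖ ≤ 1 → f x = ‖x‖ → ‖y‖ ≤ δ * ‖x‖ →
      ‖x - y‖ ≤ ‖x‖ + ε * ‖y‖ - f y := by
  obtain ⟨δ, hδ, H⟩ := hs.exists_norm_add_add_norm_sub_le hε
  refine ⟨δ, hδ, fun f x y hf hfx hy => ?_⟩
  have : ‖x‖ + f y ≤ ‖x + y‖ := calc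
    ‖x‖ + f y = f (x + y) := by rw [map_add, hfx]
    _ ≤ ‖f‖ * ‖x + y‖ := (le_abs_self _).trans (f.le_opNorm _)
    _ ≤ ‖x + y‖ := mul_le_of_le_one_left (norm_nonneg _) hf
  linarith [H x y hy]

theorem exists_eventually_norm_sub_le (hs : UniformlySmooth X) {l : Filter ι}
    (hφ : ∀ i, ‖φ i‖ ≤ 1) (hφv : ∀ i, φ i (v i) = ‖v i‖) (hv : Tendsto (‖v ·‖) l atTop)
    (hR : ∀ r > 0, ∀ᶠ i in l, ‖v i‖ ≤ R i + r) {F : StrongDual ℝ X} (hF : F ≠ 0)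
    (hφF : ∀ w, Tendsto (φ · w) l (𝓝 (F w))) :
    ∃ y, ∀ᶠ i in l, ‖v i - y‖ ≤ R i := by
  obtain ⟨y, hy, hFy⟩ := F.exists_norm_lt_one_lt_apply (norm_pos_iff.2 hF)
  obtain ⟨δ, hδ, H⟩ := hs.exists_norm_sub_le (ε := F y / 4) (by positivity)
  refine ⟨y, ?_⟩
  filter_upwards [(hφF y).eventually_const_lt (by linarith : 3 * F y / 4 < F y),
    hR (F y / 8) (by positivity), hv.eventually_ge_atTop δ⁻¹] with i hφy hvR hvδ
  have hyv : ‖y‖ ≤ δ * ‖v i‖ := by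
    rw [inv_le_iff_one_le_mul₀' hδ] at hvδ
    linarith
  have := H (φ i) (v i) y (hφ i) (hφv i) hyv
  nlinarith

theorem exists_infinite_norm_sub_le_of_tendsto_zero [CompleteSpace X] (hs : UniformlySmooth X)
    {U : Ultrafilter ι} (hU : (U : Filter ι) ≤ cofinite) (hφ : ∀ i, ‖φ i‖ ≤ 1)
    (hφv : ∀ i, φ i (v i) = ‖v i‖) (hv : Tendsto (‖v ·‖) U atTop)
    (hR : ∀ r > 0, ∀ᶠ i in U, ‖v i‖ ≤ R i + r) (hφ0 : ∀ w, Tendsto (φ · w) U (𝓝 0)) :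
    ∃ y, {i | ‖v i - y‖ ≤ R i}.Infinite := by
  set w : ℕ → ℝ := fun k => (1 / 2) ^ k
  have hw : ∀ k, 0 < w k / 24 := fun k => by positivity
  choose δ hδ H using fun k => hs.exists_norm_sub_le (hw k)
  have hφ1 : ∀ᶠ i in U, 1 ≤ ‖φ i‖ := (hv.eventually_gt_atTop 0).mono fun i hi =>
    StrongDual.one_le_norm_of_apply_eq_norm (norm_pos_iff.1 hi) (hφv i)
  obtain ⟨k, n, z, hk, hn, hP, hr⟩ := StrongDual.exists_gliding_hump_seq hU hφ hφ1
    (by norm_num : (1 : ℝ) / 3 < 1 / 2) hφ0 hw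
    (Q := fun k i => ‖v i‖ ≤ R i + w k / 24 ∧ 2 ≤ δ k * ‖v i‖) fun k =>
      (hR _ (hw k)).and <| (hv.eventually_ge_atTop (2 / δ k)).mono fun i hi => by
        rwa [div_le_iff₀' (hδ k)] at hi
  set a : ℕ → ℝ := fun j => w (k j)
  have ha0 : ∀ j, 0 ≤ a j := fun j => by positivity
  have ha : Summable a := summable_geometric_two.comp_injective hk.injective
  have ha2 : ∑' j, a j ≤ 2 :=
    tsum_geometric_two ▸ tsum_comp_le_tsum_of_inj summable_geometric_two (fun _ => by positivity)
      hk.injective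
  set y := ∑' j, a j • z j
  have hy : ‖y‖ ≤ 2 := (norm_tsum_smul_le ha0 ha fun j => (hP j).2.1).trans ha2
  refine ⟨y, (Set.infinite_range_of_injective hn).mono ?_⟩
  rintro _ ⟨j, rfl⟩
  obtain ⟨⟨hvR, hvδ⟩, -, hφz⟩ := hP j
  have hφz' : ∀ i ≠ j, -(a j / 24) ≤ φ (n j) (z i) := fun i hij => by
    rcases hij.lt_or_gt with h | h
    · exact neg_le_of_abs_le (hr i j h).2
    · rw [(hr j i h).1]
      linarith [ha0 j]
  have hφy : a j / 3 - a j / 24 * 2 ≤ φ (n j) y :=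
    le_trans (sub_le_sub (by nlinarith [ha0 j]) (by gcongr))
      (StrongDual.le_apply_tsum_smul ha0 ha (fun i => (hP i).2.1) _ (by positivity) hφz')
  show ‖v (n j) - y‖ ≤ R (n j)
  calc ‖v (n j) - y‖ ≤ ‖v (n j)‖ + a j / 24 * ‖y‖ - φ (n j) y :=
        H (k j) (φ (n j)) (v (n j)) y (hφ _) (hφv _) (by linarith)
    _ ≤ (R (n j) + a j / 24) + a j / 24 * 2 - (a j / 3 - a j / 24 * 2) := by gcongr
    _ ≤ R (n j) := by linarith [ha0 j]

theorem exists_infinite_norm_sub_le [CompleteSpace X] (hs : UniformlySmooth X)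
    {U : Ultrafilter ι} (hU : (U : Filter ι) ≤ cofinite) (hv : Tendsto (‖v ·‖) U atTop)
    (hR : ∀ r > 0, ∀ᶠ i in U, ‖v i‖ ≤ R i + r) :
    ∃ y, {i | ‖v i - y‖ ≤ R i}.Infinite := by
  choose φ hφ hφv using fun i => exists_dual_vector'' ℝ (v i)
  obtain ⟨F, hF⟩ := StrongDual.exists_tendsto_ultrafilter_of_norm_le U hφ
  rcases eq_or_ne F 0 with rfl | hF0
  · exact hs.exists_infinite_norm_sub_le_of_tendsto_zero hU hφ hφv hv hR (by simpa using hF)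
  · obtain ⟨y, hy⟩ := hs.exists_eventually_norm_sub_le hφ hφv hv hR hF0 hF
    exact ⟨y, frequently_cofinite_iff_infinite.1 (hy.frequently.filter_mono hU)⟩

end UniformlySmooth

theorem frequently_dist_le_add {α : Type*} [PseudoMetricSpace α] {x : ℕ → α} {R : ℕ → ℝ} {p : α}
    (hp : ∀ U ∈ 𝓝 p, {n | (closedBall (x n) (R n) ∩ U).Nonempty}.Infinite) {r : ℝ}
    (hr : 0 < r) : ∃ᶠ n in atTop, dist (x n) p ≤ R n + r := by
  refine Nat.frequently_atTop_iff_infinite.2 ((hp _ (closedBall_mem_nhds p hr)).mono ?_)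
  rintro n ⟨z, hzx, hzp⟩
  exact (dist_triangle _ z _).trans (add_le_add (dist_comm (x n) z ▸ hzx) hzp)

theorem not_locallyFinite_implies_not_pointFinite_general
    (X : Type*) [NormedAddCommGroup X] [NormedSpace ℝ X] [CompleteSpace X]
    (hsmooth : UniformlySmooth X)
    (x : ℕ → X) (R : ℕ → ℝ) (hR : Tendsto R atTop atTop)
    (hnlf : ∃ p : X, ∀ U ∈ nhds p, {n | (closedBall (x n) (R n) ∩ U).Nonempty}.Infinite) :
    ∃ p : X, {n | p ∈ closedBall (x n) (R n)}.Infinite := by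
  obtain ⟨p, hp⟩ := hnlf
  by_cases hpin : {n | p ∈ closedBall (x n) (R n)}.Infinite
  · exact ⟨p, hpin⟩
  have hfar : ∀ᶠ n in atTop, R n ≤ ‖x n - p‖ := by
    rw [← Nat.cofinite_eq_atTop]
    filter_upwards [(Set.not_infinite.1 hpin).eventually_cofinite_notMem] with n hn
    rw [mem_closedBall, dist_eq_norm, norm_sub_rev, not_le] at hn
    exact hn.le
  obtain ⟨φ, hφ, hφp⟩ := extraction_forall_of_frequently fun k : ℕ =>
    frequently_dist_le_add hp (Nat.one_div_pos_of_nat (n := k))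
  have hv : Tendsto (fun k => ‖x (φ k) - p‖) atTop atTop :=
    tendsto_atTop_mono' _ (hφ.tendsto_atTop.eventually hfar) (hR.comp hφ.tendsto_atTop)
  have hnear : ∀ r > 0, ∀ᶠ k in atTop, ‖x (φ k) - p‖ ≤ R (φ k) + r := fun r hr =>
    (tendsto_one_div_add_atTop_nhds_zero_nat.eventually_le_const hr).mono fun k hk => by
      simpa [dist_eq_norm] using (hφp k).trans (by gcongr)
  obtain ⟨y, hy⟩ := hsmooth.exists_infinite_norm_sub_le hyperfilter_le_cofinite
    (hv.mono_left Nat.hyperfilter_le_atTop)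
    fun r hr => (hnear r hr).filter_mono Nat.hyperfilter_le_atTop
  refine ⟨p + y, (hy.image hφ.injective.injOn).mono ?_⟩
  rintro _ ⟨k, hk, rfl⟩
  simpa [dist_eq_norm, norm_sub_rev, sub_sub, add_comm] using hk

/-- Let `X` be a separable infinite-dimensional uniformly smooth real Banach space and
let `(B(x_n, R_n))` be a countable collection of closed balls with `R_n → ∞`. If the
collection is not locally finite (some point is singular for it, i.e. each of its
neighborhoods meets infinitely many balls), then it is not point-finite (some point of
`X` lies in infinitely many of the balls). -/
theorem not_locallyFinite_implies_not_pointFinite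
    (X : Type*) [NormedAddCommGroup X] [NormedSpace ℝ X] [CompleteSpace X]
    [TopologicalSpace.SeparableSpace X] (hinf : ¬ FiniteDimensional ℝ X)
    (hsmooth : UniformlySmooth X)
    (x : ℕ → X) (R : ℕ → ℝ) (hR : Tendsto R atTop atTop)
    (hnlf : ∃ p : X, ∀ U ∈ nhds p, {n | (closedBall (x n) (R n) ∩ U).Nonempty}.Infinite) :
    ∃ p : X, {n | p ∈ closedBall (x n) (R n)}.Infinite :=
  not_locallyFinite_implies_not_pointFinite_general X hsmooth x R hR hnlf
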